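/- Let f be a Boolean function in m variables and define its polarization B_f : 𝔽₂^m × 𝔽₂^m → 𝔽₂ by B_f(x,y) = f(x+y) + f(x) + f(y) + f(0). Then the following are equivalent: (1) f is bent and the 2^m × 2^m matrix M = (f(x+y))_{x,y∈𝔽₂^m}, with entries in 𝔽₂, has rank m+2 over 𝔽₂; (2) there exist bijections σ and π of 𝔽₂^m such that B_f(x,y) = σ(x)·π(y) for all x, y ∈ 𝔽₂^m, and both f∘σ⁻¹ and f∘π⁻¹ are non-affine. -/

import Mathlib

open Finset

/-- dot product on 𝔽₂^m -/
def dotp {m : ℕ} (a x : Fin m → ZMod 2) : ZMod 2 := ∑ i, a i * x i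

/-- (−1)^a for a ∈ 𝔽₂, as an integer -/
def sgn (a : ZMod 2) : ℤ := if a = 0 then 1 else -1

/-- Walsh transform of f on a finite subset P of 𝔽₂^m -/
def walsh {m : ℕ} (P : Finset (Fin m → ZMod 2)) (f : (Fin m → ZMod 2) → ZMod 2)
    (u : Fin m → ZMod 2) : ℤ :=
  ∑ x ∈ P, sgn (f x + dotp u x)

/-- Walsh transform of f on all of 𝔽₂^m -/
def walshF {m : ℕ} (f : (Fin m → ZMod 2) → ZMod 2) (u : Fin m → ZMod 2) : ℤ :=
  walsh Finset.univ f u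


/-- A Boolean function is affine if it is of the form x ↦ b·x + ε. -/
def IsAffineBF {m : ℕ} (f : (Fin m → ZMod 2) → ZMod 2) : Prop :=
  ∃ (b : Fin m → ZMod 2) (ε : ZMod 2), ∀ x, f x = dotp b x + ε

section Aux

open Submodule Module Matrix

variable {m : ℕ}

lemma zmod2_add_self (p : ZMod 2) : p + p = 0 := by revert p; decide

/-! ### basic dot product and sign lemmas -/

lemma dotp_comm (a x : Fin m → ZMod 2) : dotp a x = dotp x a := by
  unfold dotp; exact Finset.sum_congr rfl fun i _ => mul_comm _ _

lemma dotp_add_left (a b x : Fin m → ZMod 2) : dotp (a + b) x = dotp a x + dotp b x := by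
  unfold dotp; rw [← Finset.sum_add_distrib]; exact Finset.sum_congr rfl fun i _ => by
    simp [add_mul]

lemma dotp_add_right (a x y : Fin m → ZMod 2) : dotp a (x + y) = dotp a x + dotp a y := by
  rw [dotp_comm, dotp_add_left, dotp_comm x a, dotp_comm y a]

lemma dotp_single (i : Fin m) (x : Fin m → ZMod 2) : dotp (Pi.single i 1) x = x i := by
  unfold dotp
  rw [Finset.sum_eq_single i]
  · simp
  · intro j _ hj; simp [Pi.single_apply, hj]
  · intro h; exact absurd (Finset.mem_univ i) h

lemma dotp_single_right (i : Fin m) (a : Fin m → ZMod 2) : dotp a (Pi.single i 1) = a i := by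
  rw [dotp_comm]; exact dotp_single i a

lemma dotp_zero_left (x : Fin m → ZMod 2) : dotp 0 x = 0 := by unfold dotp; simp

lemma dotp_zero_right (a : Fin m → ZMod 2) : dotp a 0 = 0 := by
  rw [dotp_comm]; exact dotp_zero_left a

lemma dotp_smul_left (c : ZMod 2) (a x : Fin m → ZMod 2) : dotp (c • a) x = c * dotp a x := by
  unfold dotp
  rw [Finset.mul_sum]
  exact Finset.sum_congr rfl fun i _ => by simp [mul_assoc]

lemma card_BV : Fintype.card (Fin m → ZMod 2) = 2 ^ m := by
  rw [Fintype.card_fun]; simp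

/-- character sum -/
lemma sum_sgn_dotp {a : Fin m → ZMod 2} (ha : a ≠ 0) :
    ∑ w : Fin m → ZMod 2, sgn (dotp a w) = 0 := by
  have : ∃ i, a i ≠ 0 := by
    by_contra h; push_neg at h; exact ha (funext fun i => h i)
  obtain ⟨i, hi⟩ := this
  have hai : a i = 1 := by
    have h2 : ∀ p : ZMod 2, p ≠ 0 → p = 1 := by decide
    exact h2 _ hi
  apply Finset.sum_ninvolution (fun w => w + Pi.single i 1)
  · intro w
    have : dotp a (w + Pi.single i 1) = dotp a w + 1 := by
      rw [dotp_add_right, dotp_comm a (Pi.single i 1), dotp_single, hai]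
    rw [this]
    have hc : ∀ c : ZMod 2, sgn c + sgn (c + 1) = 0 := by decide
    exact hc _
  · intro w _
    intro h
    have := congrFun h i
    simp at this
  · intro w; exact Finset.mem_univ _
  · intro w; funext j; simp [add_assoc, zmod2_add_self]

lemma walsh_sq (f : (Fin m → ZMod 2) → ZMod 2) (u : Fin m → ZMod 2) :
    (walshF f u) ^ 2 = ∑ z, sgn (dotp u z) * ∑ x, sgn (f x + f (x + z)) := by
  unfold walshF walsh
  rw [sq, Finset.sum_mul_sum]
  have step1 : ∀ x : Fin m → ZMod 2,
      ∑ y, sgn (f x + dotp u x) * sgn (f y + dotp u y)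
        = ∑ z, sgn (dotp u z) * sgn (f x + f (x + z)) := by
    intro x
    rw [← Fintype.sum_equiv (Equiv.addLeft x)
      (fun z => sgn (dotp u z) * sgn (f x + f (x + z)))
      (fun y => sgn (f x + dotp u x) * sgn (f y + dotp u y)) ?_]
    intro z
    have h1 : f (Equiv.addLeft x z) = f (x + z) := by simp [Equiv.addLeft]
    have h2 : dotp u (Equiv.addLeft x z) = dotp u x + dotp u z := by
      have : (Equiv.addLeft x z : Fin m → ZMod 2) = x + z := by simp [Equiv.addLeft]
      rw [this, dotp_add_right]
    simp only [h1, h2]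
    have key : ∀ p q r s : ZMod 2, sgn s * sgn (p + q) = sgn (p + r) * sgn (q + (r + s)) := by
      decide
    exact key (f x) (f (x + z)) (dotp u x) (dotp u z)
  calc ∑ x, ∑ y, sgn (f x + dotp u x) * sgn (f y + dotp u y)
      = ∑ x, ∑ z, sgn (dotp u z) * sgn (f x + f (x + z)) := by
        exact Finset.sum_congr rfl fun x _ => step1 x
    _ = ∑ z, ∑ x, sgn (dotp u z) * sgn (f x + f (x + z)) := Finset.sum_comm
    _ = ∑ z, sgn (dotp u z) * ∑ x, sgn (f x + f (x + z)) := by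
        exact Finset.sum_congr rfl fun z _ => (Finset.mul_sum _ _ _).symm

/-- (⇐) bent from the product decomposition -/
lemma bent_of_prod (f : (Fin m → ZMod 2) → ZMod 2) (σ π : Equiv.Perm (Fin m → ZMod 2))
    (hB : ∀ x y, f (x + y) + f x + f y + f 0 = dotp (σ x) (π y)) :
    ∀ u, (walshF f u) ^ 2 = 2 ^ m := by
  have hπ0 : π 0 = 0 := by
    by_contra h
    -- dotp a (π 0) = 0 for all a
    have h0 : ∀ x, dotp (σ x) (π 0) = 0 := by
      intro x
      rw [← hB x 0]
      have : ∀ p q : ZMod 2, p + p + q + q = 0 := by decide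
      simpa [add_zero] using this (f x) (f 0)
    have : ∃ i, π 0 i ≠ 0 := by
      by_contra hc; push_neg at hc; exact h (funext fun i => hc i)
    obtain ⟨i, hi⟩ := this
    obtain ⟨x, hx⟩ := σ.surjective (Pi.single i 1)
    have := h0 x
    rw [hx, dotp_single] at this
    exact hi this
  intro u
  rw [walsh_sq]
  rw [Finset.sum_eq_single 0]
  · rw [dotp_zero_right]
    have : ∀ x : Fin m → ZMod 2, sgn (f x + f (x + 0)) = 1 := by
      intro x
      have h1 : ∀ p : ZMod 2, p + p = 0 := by decide
      simp [add_zero, h1, sgn]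
    rw [Finset.sum_congr rfl fun x _ => this x]
    simp [card_BV, sgn]
  · intro z _ hz
    have inner : ∑ x, sgn (f x + f (x + z)) = 0 := by
      have hterm : ∀ x, sgn (f x + f (x + z)) = sgn (dotp (σ x) (π z)) * sgn (f z + f 0) := by
        intro x
        have hB' := hB x z
        have key : ∀ a b c d e : ZMod 2, a + b + c + d = e → b + a = e + (c + d) := by
          decide
        have : f x + f (x + z) = dotp (σ x) (π z) + (f z + f 0) :=
          key _ _ _ _ _ hB'
        rw [this]
        have : ∀ p q : ZMod 2, sgn (p + q) = sgn p * sgn q := by decide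
        exact this _ _
      rw [Finset.sum_congr rfl fun x _ => hterm x, ← Finset.sum_mul]
      have : ∑ x, sgn (dotp (σ x) (π z)) = 0 := by
        rw [Equiv.sum_comp σ (fun w => sgn (dotp w (π z)))]
        have hπz : π z ≠ 0 := fun h => hz (π.injective (h.trans hπ0.symm))
        rw [Finset.sum_congr rfl fun w _ => by rw [dotp_comm]]
        exact sum_sgn_dotp hπz
      rw [this, zero_mul]
    rw [inner, mul_zero]
  · intro h; exact absurd (Finset.mem_univ 0) h

/-- bent implies no nonzero linear structure -/
lemma no_linear_structure {f : (Fin m → ZMod 2) → ZMod 2}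
    (hb : ∀ u, (walshF f u) ^ 2 = 2 ^ m) {z : Fin m → ZMod 2} {c : ZMod 2}
    (h : ∀ x, f (x + z) = f x + c) : z = 0 := by
  by_contra hz
  -- choose u with dotp u z = c + 1
  have : ∃ u : Fin m → ZMod 2, dotp u z = c + 1 := by
    have zc : ∀ a : ZMod 2, a = 0 ∨ a = 1 := by decide
    rcases zc c with hc | hc
    · obtain ⟨i, hi⟩ : ∃ i, z i ≠ 0 := by
        by_contra hcon; push_neg at hcon; exact hz (funext fun i => hcon i)
      refine ⟨Pi.single i 1, ?_⟩
      rw [dotp_single, hc, zero_add]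
      have zc1 : ∀ a : ZMod 2, a ≠ 0 → a = 1 := by decide
      exact zc1 _ hi
    · exact ⟨0, by rw [dotp_zero_left, hc]; decide⟩
  obtain ⟨u, hu⟩ := this
  have hW : walshF f u = - walshF f u := by
    unfold walshF walsh
    nth_rewrite 1 [← Equiv.sum_comp (Equiv.addRight z) (fun x => sgn (f x + dotp u x))]
    rw [← Finset.sum_neg_distrib]
    refine Finset.sum_congr rfl fun x _ => ?_
    have h1 : (Equiv.addRight z x : Fin m → ZMod 2) = x + z := rfl
    rw [h1, h x, dotp_add_right, hu]
    have : ∀ p q r : ZMod 2, sgn (p + r + (q + (r + 1))) = - sgn (p + q) := by decide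
    exact this (f x) (dotp u x) c
  have hW0 : walshF f u = 0 := by omega
  have := hb u
  rw [hW0] at this
  simp at this
  exact absurd this.symm (by positivity)

lemma even_of_sq_eq_pow {W : ℤ} {m : ℕ} (h : W ^ 2 = 2 ^ m) : Even m := by
  have ha : W.natAbs ^ 2 = 2 ^ m := by
    have := congrArg Int.natAbs h
    rwa [Int.natAbs_pow, Int.natAbs_pow] at this
  have hane : W.natAbs ≠ 0 := by
    intro h0; rw [h0] at ha; simp [pow_succ] at ha
    exact absurd ha.symm (pow_ne_zero m two_ne_zero)
  have hfac := congrArg (fun n => n.factorization 2) ha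
  have h1 : (W.natAbs ^ 2).factorization 2 = 2 * W.natAbs.factorization 2 := by
    rw [Nat.factorization_pow]; simp
  have h2 : (Nat.factorization (2 ^ m)) 2 = m := by
    rw [Nat.Prime.factorization_pow Nat.prime_two]; simp
  simp only [h1, h2] at hfac
  exact ⟨W.natAbs.factorization 2, by omega⟩

def trf {m : ℕ} (f : (Fin m → ZMod 2) → ZMod 2) (x : Fin m → ZMod 2) :
    (Fin m → ZMod 2) → ZMod 2 := fun y => f (x + y)

def phf {m : ℕ} (f : (Fin m → ZMod 2) → ZMod 2) (x : Fin m → ZMod 2) :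
    (Fin m → ZMod 2) → ZMod 2 := fun y => f (x + y) + f x + f y + f 0

def Wsp {m : ℕ} (f : (Fin m → ZMod 2) → ZMod 2) : Submodule (ZMod 2) ((Fin m → ZMod 2) → ZMod 2) :=
  span (ZMod 2) (Set.range (trf f))

def Vsp {m : ℕ} (f : (Fin m → ZMod 2) → ZMod 2) : Submodule (ZMod 2) ((Fin m → ZMod 2) → ZMod 2) :=
  span (ZMod 2) (Set.range (phf f))

def onef (m : ℕ) : (Fin m → ZMod 2) → ZMod 2 := fun _ => 1

lemma trf_mem (f : (Fin m → ZMod 2) → ZMod 2) (x : Fin m → ZMod 2) : trf f x ∈ Wsp f :=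
  subset_span ⟨x, rfl⟩

lemma trf_trf (f : (Fin m → ZMod 2) → ZMod 2) (a x : Fin m → ZMod 2) :
    trf (trf f a) x = trf f (a + x) := by
  funext y; simp [trf, add_assoc]

/-- W is closed under translation -/
lemma trf_mem_Wsp {f g : (Fin m → ZMod 2) → ZMod 2} (hg : g ∈ Wsp f) (a : Fin m → ZMod 2) :
    trf g a ∈ Wsp f := by
  induction hg using Submodule.span_induction with
  | mem x hx =>
      obtain ⟨b, rfl⟩ := hx
      rw [trf_trf]
      exact trf_mem f _
  | zero =>
      have : trf (0 : (Fin m → ZMod 2) → ZMod 2) a = 0 := by funext y; simp [trf]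
      rw [this]; exact (Wsp f).zero_mem
  | add x y _ _ hx hy =>
      have : trf (x + y) a = trf x a + trf y a := by funext z; simp [trf]
      rw [this]; exact (Wsp f).add_mem hx hy
  | smul c x _ hx =>
      have : trf (c • x) a = c • trf x a := by funext z; simp [trf]
      rw [this]; exact (Wsp f).smul_mem c hx

/-- socle lemma: the all-ones function lies in the span of translates of any nonzero function -/
lemma one_mem_Wsp {f : (Fin m → ZMod 2) → ZMod 2} (hf : f ≠ 0) : onef m ∈ Wsp f := by
  classical
  suffices H : ∀ (k : ℕ) (g : (Fin m → ZMod 2) → ZMod 2), g ∈ Wsp f → g ≠ 0 →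
      (Finset.univ.filter (fun a => trf g a ≠ g)).card ≤ k → onef m ∈ Wsp f by
    refine H (Finset.univ.filter (fun a => trf f a ≠ f)).card f ?_ hf le_rfl
    have h := trf_mem f 0
    rwa [show trf f 0 = f from funext fun y => by simp [trf]] at h
  intro k
  induction k with
  | zero =>
      intro g hg hg0 hcard
      have hfix : ∀ a, trf g a = g := by
        intro a
        by_contra h
        have : a ∈ Finset.univ.filter (fun a => trf g a ≠ g) := by
          simp [h]
        have := Finset.card_pos.mpr ⟨a, this⟩
        omega
      -- g is constant
      have hconst : ∀ y, g y = g 0 := by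
        intro y
        have := congrFun (hfix y) 0
        simpa [trf] using this
      have hg01 : g 0 = 1 := by
        rcases (by decide : ∀ b : ZMod 2, b = 0 ∨ b = 1) (g 0) with h0 | h1
        · exact absurd (funext fun y => by rw [hconst y, h0]; rfl) hg0
        · exact h1
      have : g = onef m := funext fun y => by rw [hconst y, hg01]; rfl
      rwa [← this]
  | succ k ih =>
      intro g hg hg0 hcard
      by_cases hfix : ∀ a, trf g a = g
      · -- same constant argument
        have hconst : ∀ y, g y = g 0 := by
          intro y
          have := congrFun (hfix y) 0
          simpa [trf] using this
        have hg01 : g 0 = 1 := by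
          rcases (by decide : ∀ b : ZMod 2, b = 0 ∨ b = 1) (g 0) with h0 | h1
          · exact absurd (funext fun y => by rw [hconst y, h0]; rfl) hg0
          · exact h1
        have : g = onef m := funext fun y => by rw [hconst y, hg01]; rfl
        rwa [← this]
      · push_neg at hfix
        obtain ⟨a, ha⟩ := hfix
        set g' := g + trf g a with hg'def
        have hg'W : g' ∈ Wsp f := (Wsp f).add_mem hg (trf_mem_Wsp hg a)
        have hg'0 : g' ≠ 0 := by
          intro h
          apply ha
          funext y
          have := congrFun h y
          simp only [hg'def, Pi.add_apply, Pi.zero_apply] at this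
          have h2 : ∀ p q : ZMod 2, p + q = 0 → q = p := by decide
          exact h2 _ _ this
        -- new fixed point: a
        have hfa : trf g' a = g' := by
          funext y
          have haa : a + a = 0 := by
            funext i; simp only [Pi.add_apply, Pi.zero_apply]; exact zmod2_add_self _
          simp only [hg'def, trf, Pi.add_apply]
          rw [← add_assoc, haa, zero_add]
          exact add_comm _ _
        -- old fixed points remain fixed
        have hold : ∀ b, trf g b = g → trf g' b = g' := by
          intro b hb
          funext y
          simp only [hg'def, trf, Pi.add_apply]
          have h1 : g (b + y) = g y := congrFun hb y
          have h2 : g (a + (b + y)) = g (a + y) := by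
            have : a + (b + y) = b + (a + y) := by ring
            rw [this]; exact congrFun hb (a + y)
          rw [h1, h2]
        have hsub : (Finset.univ.filter (fun b => trf g' b ≠ g')) ⊆
            (Finset.univ.filter (fun b => trf g b ≠ g)).erase a := by
          intro b hb
          simp only [Finset.mem_filter, Finset.mem_univ, true_and] at hb
          rw [Finset.mem_erase]
          constructor
          · intro hba; rw [hba] at hb; exact hb hfa
          · simp only [Finset.mem_filter, Finset.mem_univ, true_and]
            intro hgb; exact hb (hold b hgb)
        have hcard' : (Finset.univ.filter (fun b => trf g' b ≠ g')).card ≤ k := by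
          have h1 := Finset.card_le_card hsub
          have h2 : ((Finset.univ.filter (fun b => trf g b ≠ g)).erase a).card
              = (Finset.univ.filter (fun b => trf g b ≠ g)).card - 1 := by
            apply Finset.card_erase_of_mem
            simp [ha]
          have h3 : (Finset.univ.filter (fun b => trf g b ≠ g)).card ≥ 1 :=
            Finset.card_pos.mpr ⟨a, by simp [ha]⟩
          omega
        exact ih g' hg'W hg'0 hcard'



lemma phf_symm (f : (Fin m → ZMod 2) → ZMod 2) (x y : Fin m → ZMod 2) :
    phf f x y = phf f y x := by
  unfold phf; rw [add_comm x y]; ring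

lemma phf_eval_zero (f : (Fin m → ZMod 2) → ZMod 2) (x : Fin m → ZMod 2) : phf f x 0 = 0 := by
  unfold phf
  rw [add_zero]
  have : ∀ p q : ZMod 2, p + p + q + q = 0 := by decide
  exact this _ _

lemma phf_diag (f : (Fin m → ZMod 2) → ZMod 2) (x : Fin m → ZMod 2) : phf f x x = 0 := by
  unfold phf
  have hx : x + x = 0 := by funext i; simp only [Pi.add_apply, Pi.zero_apply]; exact zmod2_add_self _
  rw [hx]
  have : ∀ p q : ZMod 2, q + p + p + q = 0 := by decide
  exact this _ _

lemma mem_Vsp_eval_zero {f : (Fin m → ZMod 2) → ZMod 2} {v : (Fin m → ZMod 2) → ZMod 2}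
    (hv : v ∈ Vsp f) : v 0 = 0 := by
  induction hv using Submodule.span_induction with
  | mem x hx => obtain ⟨b, rfl⟩ := hx; exact phf_eval_zero f b
  | zero => rfl
  | add x y _ _ hx hy => simp [hx, hy]
  | smul c x _ hx => simp [hx]

lemma one_not_mem_Vsp (f : (Fin m → ZMod 2) → ZMod 2) : onef m ∉ Vsp f := by
  intro h
  have := mem_Vsp_eval_zero h
  simp [onef] at this

lemma f_mem_Wsp (f : (Fin m → ZMod 2) → ZMod 2) : f ∈ Wsp f := by
  have h : trf f 0 ∈ Wsp f := subset_span ⟨0, rfl⟩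
  rwa [show trf f 0 = f from funext fun y => by simp [trf]] at h

/-- the key decomposition of translates -/
lemma trf_eq (f : (Fin m → ZMod 2) → ZMod 2) (x : Fin m → ZMod 2) :
    trf f x = phf f x + f + (f x + f 0) • onef m := by
  funext y
  simp only [trf, phf, Pi.add_apply, Pi.smul_apply, onef, smul_eq_mul, mul_one]
  have : ∀ a b c d : ZMod 2, a = a + b + c + d + c + (b + d) := by decide
  exact this (f (x + y)) (f x) (f y) (f 0)

lemma phf_eq (f : (Fin m → ZMod 2) → ZMod 2) (x : Fin m → ZMod 2) :
    phf f x = trf f x + f + (f x + f 0) • onef m := by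
  rw [trf_eq]
  funext y
  simp only [Pi.add_apply, Pi.smul_apply, onef, smul_eq_mul, mul_one]
  have : ∀ a b c : ZMod 2, a = a + b + c + b + c := by decide
  exact this _ _ _

/-- the lattice identity -/
lemma sup_identity (f : (Fin m → ZMod 2) → ZMod 2) :
    Wsp f ⊔ span (ZMod 2) {onef m} = (Vsp f ⊔ span (ZMod 2) {f}) ⊔ span (ZMod 2) {onef m} := by
  apply le_antisymm
  · apply sup_le
    · rw [Wsp, span_le]
      rintro _ ⟨x, rfl⟩
      rw [trf_eq]
      have h1 : phf f x ∈ (Vsp f ⊔ span (ZMod 2) {f}) ⊔ span (ZMod 2) {onef m} :=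
        Submodule.mem_sup_left (Submodule.mem_sup_left (subset_span ⟨x, rfl⟩ : phf f x ∈ Vsp f))
      have h2 : f ∈ (Vsp f ⊔ span (ZMod 2) {f}) ⊔ span (ZMod 2) {onef m} :=
        Submodule.mem_sup_left (Submodule.mem_sup_right (subset_span rfl))
      have h3 : (f x + f 0) • onef m ∈ (Vsp f ⊔ span (ZMod 2) {f}) ⊔ span (ZMod 2) {onef m} :=
        Submodule.smul_mem _ _ (Submodule.mem_sup_right (subset_span rfl))
      exact add_mem (add_mem h1 h2) h3
    · exact le_sup_right
  · apply sup_le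
    · apply sup_le
      · rw [Vsp, span_le]
        rintro _ ⟨x, rfl⟩
        rw [phf_eq]
        have h1 : trf f x ∈ Wsp f ⊔ span (ZMod 2) {onef m} :=
          Submodule.mem_sup_left (subset_span ⟨x, rfl⟩ : trf f x ∈ Wsp f)
        have h2 : f ∈ Wsp f ⊔ span (ZMod 2) {onef m} := Submodule.mem_sup_left (f_mem_Wsp f)
        have h3 : (f x + f 0) • onef m ∈ Wsp f ⊔ span (ZMod 2) {onef m} :=
          Submodule.smul_mem _ _ (Submodule.mem_sup_right (subset_span rfl))
        exact add_mem (add_mem h1 h2) h3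
      · rw [span_le]
        intro y hy
        rw [Set.mem_singleton_iff] at hy
        rw [hy]
        exact Submodule.mem_sup_left (f_mem_Wsp f)
    · exact le_sup_right

lemma finrank_sup_singleton {p : Submodule (ZMod 2) ((Fin m → ZMod 2) → ZMod 2)}
    {x : (Fin m → ZMod 2) → ZMod 2} (hx : x ∉ p) :
    finrank (ZMod 2) ↥(p ⊔ span (ZMod 2) {x}) = finrank (ZMod 2) ↥p + 1 := by
  have hx0 : x ≠ 0 := fun h => hx (h ▸ p.zero_mem)
  have hinf : p ⊓ span (ZMod 2) {x} = ⊥ := by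
    rw [eq_bot_iff]
    intro y hy
    obtain ⟨hy1, hy2⟩ := Submodule.mem_inf.mp hy
    rw [Submodule.mem_span_singleton] at hy2
    obtain ⟨c, rfl⟩ := hy2
    rcases (by decide : ∀ a : ZMod 2, a = 0 ∨ a = 1) c with h0 | h1
    · rw [h0, zero_smul]; exact Submodule.mem_bot _ |>.mpr rfl
    · rw [h1, one_smul] at hy1; exact absurd hy1 hx
  have := Submodule.finrank_sup_add_finrank_inf_eq p (span (ZMod 2) {x})
  rw [hinf] at this
  rw [finrank_span_singleton hx0] at this
  simp only [finrank_bot] at this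
  omega

lemma even_card_of_fpf {ι : Type*} [Fintype ι] [DecidableEq ι] (σ : Equiv.Perm ι)
    (hinv : σ⁻¹ = σ) (hf : ∀ i, σ i ≠ i) : Even (Fintype.card ι) := by
  have hsum : ∑ _i : ι, (1 : ZMod 2) = 0 := by
    apply Finset.sum_ninvolution σ
    · intro a; exact zmod2_add_self 1
    · intro a ha; exact hf a
    · intro a; exact Finset.mem_univ _
    · intro a
      nth_rewrite 1 [← hinv]
      exact σ.symm_apply_apply a
  rw [Finset.sum_const, Finset.card_univ, nsmul_eq_mul, mul_one] at hsum
  have := (ZMod.natCast_eq_zero_iff (Fintype.card ι) 2).mp hsum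
  exact even_iff_two_dvd.mpr this

lemma det_alt_zero {ι : Type*} [Fintype ι] [DecidableEq ι] (A : Matrix ι ι (ZMod 2))
    (hsym : ∀ i j, A i j = A j i) (hdiag : ∀ i, A i i = 0)
    (hodd : ¬ Even (Fintype.card ι)) : A.det = 0 := by
  rw [Matrix.det_apply]
  have hsmul : ∀ (u : ℤˣ) (x : ZMod 2), u • x = x := by
    intro u x
    have hneg : ∀ x : ZMod 2, -x = x := by decide
    rcases Int.units_eq_one_or u with h | h <;> simp [h, hneg]
  calc ∑ σ : Equiv.Perm ι, Equiv.Perm.sign σ • ∏ i, A (σ i) i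
      = ∑ σ : Equiv.Perm ι, ∏ i, A (σ i) i :=
        Finset.sum_congr rfl fun σ _ => hsmul _ _
    _ = 0 := by
        apply Finset.sum_ninvolution (fun σ => σ⁻¹)
        · intro σ
          have h : ∏ i, A (σ⁻¹ i) i = ∏ i, A (σ i) i := by
            calc ∏ i, A (σ⁻¹ i) i = ∏ i, A (σ⁻¹ (σ i)) (σ i) :=
                  (Equiv.prod_comp σ (fun j => A (σ⁻¹ j) j)).symm
              _ = ∏ i, A i (σ i) := by
                  refine Finset.prod_congr rfl fun i _ => by exact congrArg (fun j => A j (σ i)) (σ.symm_apply_apply i)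
              _ = ∏ i, A (σ i) i := Finset.prod_congr rfl fun i _ => hsym _ _
          rw [h]; exact zmod2_add_self _
        · intro σ hσ
          intro heq
          -- σ is an involution; if it has a fixed point, the product is 0
          by_cases hfp : ∃ i, σ i = i
          · obtain ⟨i, hi⟩ := hfp
            apply hσ
            apply Finset.prod_eq_zero (Finset.mem_univ i)
            rw [hi, hdiag]
          · push_neg at hfp
            exact hodd (even_card_of_fpf σ heq hfp)
        · intro σ; exact Finset.mem_univ _
        · intro σ; exact inv_inv σ

lemma even_finrank_Vsp (f : (Fin m → ZMod 2) → ZMod 2) :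
    Even (finrank (ZMod 2) ↥(Vsp f)) := by
  classical
  obtain ⟨b, hb_sub, hb_span, hb_ind⟩ :=
    exists_linearIndependent (ZMod 2) (Set.range (phf f))
  haveI : Fintype b := ((Set.finite_range (phf f)).subset hb_sub).fintype
  have hrank : finrank (ZMod 2) ↥(Vsp f) = b.toFinset.card := by
    rw [Vsp, ← hb_span]
    exact finrank_span_set_eq_card hb_ind
  -- choose preimages
  have hchoice : ∀ v : b, ∃ x, phf f x = (v : (Fin m → ZMod 2) → ZMod 2) :=
    fun v => hb_sub v.2
  choose pt hpt using hchoice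
  set G : Matrix b b (ZMod 2) := fun u v => (u : (Fin m → ZMod 2) → ZMod 2) (pt v) with hG
  have hGsym : ∀ u v, G u v = G v u := by
    intro u v
    show (u : (Fin m → ZMod 2) → ZMod 2) (pt v) = (v : (Fin m → ZMod 2) → ZMod 2) (pt u)
    rw [← hpt u, ← hpt v, phf_symm]
  have hGdiag : ∀ v, G v v = 0 := by
    intro v
    show (v : (Fin m → ZMod 2) → ZMod 2) (pt v) = 0
    rw [← hpt v, phf_diag]
  -- nondegeneracy
  have hnondeg : ∀ c : b → ZMod 2, G *ᵥ c = 0 → c = 0 := by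
    intro c hmul
    have hrow : ∀ v : b, ∑ u : b, c u * G u v = 0 := by
      intro v
      have := congrFun hmul v
      rw [Matrix.mulVec, dotProduct] at this
      calc ∑ u : b, c u * G u v = ∑ u : b, G v u * c u := by
            exact Finset.sum_congr rfl fun u _ => by rw [hGsym, mul_comm]
        _ = 0 := this
    set E : ((Fin m → ZMod 2) → ZMod 2) →ₗ[ZMod 2] ZMod 2 :=
      ∑ u : b, c u • LinearMap.proj (R := ZMod 2) (φ := fun _ : Fin m → ZMod 2 => ZMod 2) (pt u)
      with hE
    have hEapp : ∀ h : (Fin m → ZMod 2) → ZMod 2, E h = ∑ u : b, c u * h (pt u) := by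
      intro h
      rw [hE]
      simp [LinearMap.sum_apply, LinearMap.proj]
    have hEb : ∀ v, v ∈ b → E v = 0 := by
      intro v hv
      rw [hEapp]
      have heq : ∀ u : b, v (pt u) = G u (⟨v, hv⟩ : b) := by
        intro u
        rw [hGsym]
      rw [Finset.sum_congr rfl fun u _ => by rw [heq u]]
      exact hrow _
    have hEV : Vsp f ≤ LinearMap.ker E := by
      rw [Vsp, ← hb_span, span_le]
      intro y hy
      exact hEb y hy
    have hw : ∑ u : b, c u • (u : (Fin m → ZMod 2) → ZMod 2) = 0 := by
      funext z
      rw [Finset.sum_apply]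
      simp only [Pi.smul_apply, smul_eq_mul]
      have : ∀ u : b, (u : (Fin m → ZMod 2) → ZMod 2) z = phf f z (pt u) := by
        intro u
        rw [← hpt u, phf_symm]
      rw [Finset.sum_congr rfl fun u _ => by rw [this u]]
      have hz : phf f z ∈ Vsp f := subset_span ⟨z, rfl⟩
      have := hEV hz
      rw [LinearMap.mem_ker, hEapp] at this
      exact this.trans rfl
    have := Fintype.linearIndependent_iff.mp hb_ind c hw
    funext u
    exact this u
  have hdet : G.det ≠ 0 := by
    intro h0
    obtain ⟨v, hv, hmul⟩ := Matrix.exists_mulVec_eq_zero_iff.mpr h0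
    exact hv (hnondeg v hmul)
  by_contra hodd
  apply hdet
  apply det_alt_zero G hGsym hGdiag
  rw [show Fintype.card ↥b = b.toFinset.card from (Set.toFinset_card b).symm, ← hrank]
  exact hodd

/-- the linear map a ↦ (y ↦ a · π(y)) -/
def Lmap {m : ℕ} (π : Equiv.Perm (Fin m → ZMod 2)) :
    (Fin m → ZMod 2) →ₗ[ZMod 2] ((Fin m → ZMod 2) → ZMod 2) where
  toFun a := fun y => dotp a (π y)
  map_add' a b := by funext y; exact dotp_add_left a b (π y)
  map_smul' c a := by funext y; simp [dotp_smul_left]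

lemma Lmap_inj (π : Equiv.Perm (Fin m → ZMod 2)) : Function.Injective (Lmap (m := m) π) := by
  rw [← LinearMap.ker_eq_bot, eq_bot_iff]
  intro a ha
  rw [LinearMap.mem_ker] at ha
  rw [Submodule.mem_bot]
  funext i
  have := congrFun ha (π.symm (Pi.single i 1))
  rw [show (Lmap π a) (π.symm (Pi.single i 1)) = dotp a (π (π.symm (Pi.single i 1))) from rfl,
    Equiv.apply_symm_apply] at this
  simp only [Pi.zero_apply] at this ⊢
  rw [← dotp_single_right i a]
  exact this

lemma Vsp_eq_range {f : (Fin m → ZMod 2) → ZMod 2} {σ π : Equiv.Perm (Fin m → ZMod 2)}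
    (hB : ∀ x y, f (x + y) + f x + f y + f 0 = dotp (σ x) (π y)) :
    Vsp f = LinearMap.range (Lmap π) := by
  have hphi : ∀ x, phf f x = Lmap π (σ x) := by
    intro x; funext y; exact hB x y
  have hrange : Set.range (phf f) = Set.range (Lmap π) := by
    ext g
    constructor
    · rintro ⟨x, rfl⟩; exact ⟨σ x, (hphi x).symm⟩
    · rintro ⟨a, rfl⟩
      obtain ⟨x, rfl⟩ := σ.surjective a
      exact ⟨x, hphi x⟩
  rw [Vsp, hrange, ← LinearMap.coe_range, Submodule.span_eq]

lemma finrank_Vsp_eq {f : (Fin m → ZMod 2) → ZMod 2} {σ π : Equiv.Perm (Fin m → ZMod 2)}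
    (hB : ∀ x y, f (x + y) + f x + f y + f 0 = dotp (σ x) (π y)) :
    finrank (ZMod 2) ↥(Vsp f) = m := by
  rw [Vsp_eq_range hB, LinearMap.finrank_range_of_inj (Lmap_inj π),
    Module.finrank_fintype_fun_eq_card, Fintype.card_fin]

lemma f_mem_iff_affine {f : (Fin m → ZMod 2) → ZMod 2} {σ π : Equiv.Perm (Fin m → ZMod 2)}
    (hB : ∀ x y, f (x + y) + f x + f y + f 0 = dotp (σ x) (π y)) :
    f ∈ Vsp f ⊔ span (ZMod 2) {onef m} ↔ IsAffineBF (fun x => f (π.symm x)) := by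
  rw [Vsp_eq_range hB]
  constructor
  · intro h
    obtain ⟨v, hv, w, hw, hvw⟩ := Submodule.mem_sup.mp h
    obtain ⟨a, rfl⟩ := hv
    rw [Submodule.mem_span_singleton] at hw
    obtain ⟨c, rfl⟩ := hw
    refine ⟨a, c, fun x => ?_⟩
    have := congrFun hvw (π.symm x)
    show f (π.symm x) = dotp a x + c
    rw [← this]
    simp only [Pi.add_apply, Pi.smul_apply, onef, smul_eq_mul, mul_one]
    rw [show (Lmap π a) (π.symm x) = dotp a (π (π.symm x)) from rfl, Equiv.apply_symm_apply]
  · rintro ⟨b, ε, h⟩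
    have : f = Lmap π b + ε • onef m := by
      funext y
      have h2 : f (π.symm (π y)) = dotp b (π y) + ε := h (π y)
      rw [Equiv.symm_apply_apply] at h2
      simp only [Pi.add_apply, Pi.smul_apply, onef, smul_eq_mul, mul_one]
      exact h2
    rw [this]
    exact Submodule.add_mem _ (Submodule.mem_sup_left ⟨b, rfl⟩)
      (Submodule.mem_sup_right (Submodule.smul_mem _ _ (subset_span rfl)))


/-- construction of the two permutations in the forward direction -/
lemma construct_perms (f : (Fin m → ZMod 2) → ZMod 2)
    (hinj : Function.Injective (phf f))
    (hrankV : finrank (ZMod 2) ↥(Vsp f) = m)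
    (hfnot : f ∉ Vsp f ⊔ span (ZMod 2) {onef m}) :
    ∃ σ π : Equiv.Perm (Fin m → ZMod 2),
      (∀ x y : Fin m → ZMod 2, f (x + y) + f x + f y + f 0 = dotp (σ x) (π y)) ∧
      ¬ IsAffineBF (fun x => f (σ.symm x)) ∧
      ¬ IsAffineBF (fun x => f (π.symm x)) := by
  classical
  obtain ⟨b, hb_sub, hb_span, hb_ind⟩ :=
    exists_linearIndependent (ZMod 2) (Set.range (phf f))
  haveI : Fintype b := ((Set.finite_range (phf f)).subset hb_sub).fintype
  have hcard : Fintype.card b = m := by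
    rw [← Set.toFinset_card]
    rw [← finrank_span_set_eq_card hb_ind, hb_span]
    exact hrankV
  -- index the basis by Fin m
  let e : Fin m ≃ b := (Fintype.equivFinOfCardEq hcard).symm
  let vfam : Fin m → ((Fin m → ZMod 2) → ZMod 2) := fun i => (e i : _)
  have hvind : LinearIndependent (ZMod 2) vfam := hb_ind.comp e e.injective
  have hvspan : span (ZMod 2) (Set.range vfam) = Vsp f := by
    have : Set.range vfam = b := by
      ext g
      constructor
      · rintro ⟨i, rfl⟩; exact (e i).2
      · intro hg; exact ⟨e.symm ⟨g, hg⟩, by simp [vfam]⟩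
    rw [this, Vsp, hb_span]
  -- choose preimage points
  have hchoice : ∀ i : Fin m, ∃ x, phf f x = vfam i := fun i => hb_sub (e i).2
  choose pt hpt using hchoice
  -- the basis
  let Bas : Basis (Fin m) (ZMod 2) ↥(span (ZMod 2) (Set.range vfam)) := Basis.span hvind
  have hphimem : ∀ x, phf f x ∈ span (ZMod 2) (Set.range vfam) := by
    intro x
    rw [hvspan]
    exact subset_span ⟨x, rfl⟩
  -- the maps
  let sσ : (Fin m → ZMod 2) → (Fin m → ZMod 2) :=
    fun x => fun i => Bas.repr ⟨phf f x, hphimem x⟩ i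
  let pπ : (Fin m → ZMod 2) → (Fin m → ZMod 2) := fun y => fun i => phf f (pt i) y
  -- the key identity
  have hkey : ∀ x y, phf f x y = dotp (sσ x) (pπ y) := by
    intro x y
    have hrepr := Bas.sum_repr ⟨phf f x, hphimem x⟩
    have := congrArg (fun v : ↥(span (ZMod 2) (Set.range vfam)) =>
      (v : (Fin m → ZMod 2) → ZMod 2) y) hrepr
    simp only at this
    rw [← this]
    have hcoe : ∀ i : Fin m, ((Bas.repr ⟨phf f x, hphimem x⟩ i • Bas i :
        ↥(span (ZMod 2) (Set.range vfam))) : (Fin m → ZMod 2) → ZMod 2) y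
        = Bas.repr ⟨phf f x, hphimem x⟩ i * phf f (pt i) y := by
      intro i
      have : ((Bas i : ↥(span (ZMod 2) (Set.range vfam))) :
          (Fin m → ZMod 2) → ZMod 2) = vfam i := congrArg Subtype.val (Module.Basis.span_apply hvind i)
      rw [Submodule.coe_smul, this]
      simp [hpt i]
    rw [show (((∑ i, Bas.repr ⟨phf f x, hphimem x⟩ i • Bas i :
        ↥(span (ZMod 2) (Set.range vfam)))) : (Fin m → ZMod 2) → ZMod 2) y
      = ∑ i, Bas.repr ⟨phf f x, hphimem x⟩ i * phf f (pt i) y from by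
        rw [Submodule.coe_sum]
        rw [Finset.sum_apply]
        exact Finset.sum_congr rfl fun i _ => hcoe i]
    rfl
  -- injectivity of sσ
  have hsinj : Function.Injective sσ := by
    intro x x' h
    have h1 : Bas.repr ⟨phf f x, hphimem x⟩ = Bas.repr ⟨phf f x', hphimem x'⟩ := by
      ext i
      exact congrFun h i
    have h2 := Bas.repr.injective h1
    have h3 : phf f x = phf f x' := congrArg Subtype.val h2
    exact hinj h3
  have hpinj : Function.Injective pπ := by
    intro y y' h
    have heval : ∀ i, phf f (pt i) y = phf f (pt i) y' := fun i => congrFun h i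
    -- the functional v ↦ v y + v y' kills the basis, hence all of V
    let D : ((Fin m → ZMod 2) → ZMod 2) →ₗ[ZMod 2] ZMod 2 :=
      LinearMap.proj (R := ZMod 2) (φ := fun _ : Fin m → ZMod 2 => ZMod 2) y
        + LinearMap.proj (R := ZMod 2) (φ := fun _ : Fin m → ZMod 2 => ZMod 2) y'
    have hDapp : ∀ v : (Fin m → ZMod 2) → ZMod 2, D v = v y + v y' := fun v => rfl
    have hDv : Vsp f ≤ LinearMap.ker D := by
      rw [← hvspan, span_le]
      rintro _ ⟨i, rfl⟩
      rw [SetLike.mem_coe, LinearMap.mem_ker, hDapp, ← hpt i, heval i]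
      exact zmod2_add_self _
    have hphiz : ∀ z, phf f z y = phf f z y' := by
      intro z
      have hz : phf f z ∈ Vsp f := subset_span ⟨z, rfl⟩
      have := hDv hz
      rw [LinearMap.mem_ker, hDapp] at this
      have hcancel : ∀ p q : ZMod 2, p + q = 0 → p = q := by decide
      exact hcancel _ _ this
    apply hinj
    funext z
    rw [phf_symm f y z, phf_symm f y' z]
    exact hphiz z
  let σe : Equiv.Perm (Fin m → ZMod 2) := Equiv.ofBijective sσ
    ((Finite.injective_iff_bijective).mp hsinj)
  let πe : Equiv.Perm (Fin m → ZMod 2) := Equiv.ofBijective pπ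
    ((Finite.injective_iff_bijective).mp hpinj)
  refine ⟨σe, πe, fun x y => hkey x y, ?_, ?_⟩
  · rintro ⟨bb, ε, hab⟩
    apply hfnot
    obtain ⟨y0, hy0⟩ := πe.surjective bb
    have hfx : ∀ x, f x = phf f y0 x + ε := by
      intro x
      have h1 : f (σe.symm (σe x)) = dotp bb (σe x) + ε := hab (σe x)
      rw [Equiv.symm_apply_apply] at h1
      rw [h1, ← hy0]
      have : dotp (pπ y0) (sσ x) = dotp (sσ x) (pπ y0) := dotp_comm _ _
      rw [show (πe y0 : Fin m → ZMod 2) = pπ y0 from rfl,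
        show (σe x : Fin m → ZMod 2) = sσ x from rfl, this, ← hkey x y0, phf_symm]
    have : f = phf f y0 + ε • onef m := by
      funext x
      rw [hfx x]
      simp [onef]
    have hmem : phf f y0 + ε • onef m ∈ Vsp f ⊔ span (ZMod 2) {onef m} :=
      Submodule.add_mem _ (Submodule.mem_sup_left (subset_span ⟨y0, rfl⟩))
        (Submodule.mem_sup_right (Submodule.smul_mem _ _ (subset_span rfl)))
    rwa [← this] at hmem
  · rintro ⟨bb, ε, hab⟩
    apply hfnot
    have hfy : ∀ y, f y = (∑ i, bb i • phf f (pt i)) y + ε := by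
      intro y
      have h1 : f (πe.symm (πe y)) = dotp bb (πe y) + ε := hab (πe y)
      rw [Equiv.symm_apply_apply] at h1
      rw [h1]
      congr 1
      rw [show (πe y : Fin m → ZMod 2) = pπ y from rfl]
      rw [Finset.sum_apply]
      unfold dotp
      exact Finset.sum_congr rfl fun i _ => by simp [pπ]
    have hv : (∑ i, bb i • phf f (pt i)) ∈ Vsp f :=
      Submodule.sum_mem _ fun i _ => Submodule.smul_mem _ _ (subset_span ⟨pt i, rfl⟩)
    have : f = (∑ i, bb i • phf f (pt i)) + ε • onef m := by
      funext y
      rw [hfy y]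
      simp [onef]
    have hmem : (∑ i, bb i • phf f (pt i)) + ε • onef m ∈ Vsp f ⊔ span (ZMod 2) {onef m} :=
      Submodule.add_mem _ (Submodule.mem_sup_left hv)
        (Submodule.mem_sup_right (Submodule.smul_mem _ _ (subset_span rfl)))
    rwa [← this] at hmem


lemma vec_add_self (x : Fin m → ZMod 2) : x + x = 0 := by
  funext i; simp only [Pi.add_apply, Pi.zero_apply]; exact zmod2_add_self _

lemma rank_eq_finrank_Wsp (f : (Fin m → ZMod 2) → ZMod 2) :
    Matrix.rank (Matrix.of (fun x y : Fin m → ZMod 2 => f (x + y)))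
      = finrank (ZMod 2) ↥(Wsp f) := by
  rw [Matrix.rank_eq_finrank_span_cols]
  have h : (Matrix.of (fun x y : Fin m → ZMod 2 => f (x + y)))ᵀ = trf f := by
    funext y x; simp [Matrix.transpose, trf, add_comm]
  rw [Matrix.col, h]
  rfl

lemma phf_injective_of_bent {f : (Fin m → ZMod 2) → ZMod 2}
    (hb : ∀ u, (walshF f u) ^ 2 = 2 ^ m) : Function.Injective (phf f) := by
  intro x x' h
  have key : ∀ w, f (w + (x + x')) = f w + (f x + f x') := by
    intro w
    have h1 := congrFun h (x' + w)
    simp only [phf] at h1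
    have e1 : x + (x' + w) = w + (x + x') := by abel
    have e2 : x' + (x' + w) = w := by rw [← add_assoc, vec_add_self, zero_add]
    rw [e1, e2] at h1
    have hz : ∀ A B c1 c2 t c0 : ZMod 2,
        A + c1 + t + c0 = B + c2 + t + c0 → A = B + (c1 + c2) := by decide
    exact hz _ _ _ _ _ _ h1
  have hz0 := no_linear_structure hb key
  funext i
  have := congrFun hz0 i
  simp only [Pi.add_apply, Pi.zero_apply] at this
  have hcancel : ∀ p q : ZMod 2, p + q = 0 → p = q := by decide
  exact hcancel _ _ this

lemma finrank_Vsp_ge {f : (Fin m → ZMod 2) → ZMod 2}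
    (hinj : Function.Injective (phf f)) : m ≤ finrank (ZMod 2) ↥(Vsp f) := by
  classical
  haveI : Fintype ↥(Vsp f) := Fintype.ofFinite _
  have hcardV : Fintype.card ↥(Vsp f) = 2 ^ finrank (ZMod 2) ↥(Vsp f) := by
    have := card_eq_pow_finrank (K := ZMod 2) (V := ↥(Vsp f))
    simpa using this
  have hinj2 : Function.Injective
      (fun x : Fin m → ZMod 2 => (⟨phf f x, subset_span ⟨x, rfl⟩⟩ : ↥(Vsp f))) := by
    intro x x' h
    exact hinj (congrArg Subtype.val h)
  have hle := Fintype.card_le_of_injective _ hinj2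
  rw [card_BV, hcardV] at hle
  exact (Nat.pow_le_pow_iff_right (by norm_num)).mp hle

end Aux

theorem stmt_17 (m : ℕ) (f : (Fin m → ZMod 2) → ZMod 2) :
    ((∀ a, (walshF f a) ^ 2 = 2 ^ m) ∧
      Matrix.rank (Matrix.of (fun x y : Fin m → ZMod 2 => f (x + y))) = m + 2)
    ↔
    (∃ σ π : Equiv.Perm (Fin m → ZMod 2),
      (∀ x y : Fin m → ZMod 2, f (x + y) + f x + f y + f 0 = dotp (σ x) (π y)) ∧
      ¬ IsAffineBF (fun x => f (σ.symm x)) ∧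
      ¬ IsAffineBF (fun x => f (π.symm x))) := by
  open Submodule Module in
  constructor
  · rintro ⟨hb, hrank⟩
    rw [rank_eq_finrank_Wsp] at hrank
    have hf0 : f ≠ 0 := by
      intro h
      have hW : Wsp f = ⊥ := by
        rw [Wsp, eq_bot_iff, span_le]
        rintro _ ⟨x, rfl⟩
        have : trf f x = 0 := by funext y; simp [trf, h]
        simp [this]
      rw [hW, finrank_bot] at hrank
      omega
    have hone := one_mem_Wsp hf0
    have hWsup : Wsp f ⊔ span (ZMod 2) {onef m} = Wsp f :=
      sup_eq_left.mpr (span_le.mpr (Set.singleton_subset_iff.mpr hone))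
    have hiden : finrank (ZMod 2)
        ↥((Vsp f ⊔ span (ZMod 2) {onef m}) ⊔ span (ZMod 2) {f}) = m + 2 := by
      rw [← sup_right_comm, ← sup_identity, hWsup]
      exact hrank
    have hminj := phf_injective_of_bent hb
    have hmge := finrank_Vsp_ge hminj
    have heven_m := even_of_sq_eq_pow (hb 0)
    have heven_n := even_finrank_Vsp f
    have h1V := one_not_mem_Vsp f
    have hV1 : finrank (ZMod 2) ↥(Vsp f ⊔ span (ZMod 2) {onef m})
        = finrank (ZMod 2) ↥(Vsp f) + 1 := finrank_sup_singleton h1V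
    by_cases hf : f ∈ Vsp f ⊔ span (ZMod 2) {onef m}
    · have hsupf : (Vsp f ⊔ span (ZMod 2) {onef m}) ⊔ span (ZMod 2) {f}
          = Vsp f ⊔ span (ZMod 2) {onef m} :=
        sup_eq_left.mpr (span_le.mpr (Set.singleton_subset_iff.mpr hf))
      rw [hsupf, hV1] at hiden
      obtain ⟨a, haa⟩ := heven_m
      obtain ⟨bq, hbb⟩ := heven_n
      omega
    · rw [finrank_sup_singleton hf, hV1] at hiden
      have hVm : finrank (ZMod 2) ↥(Vsp f) = m := by omega
      exact construct_perms f hminj hVm hf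
  · rintro ⟨σ, π, hB, hσa, hπa⟩
    have hb := bent_of_prod f σ π hB
    refine ⟨hb, ?_⟩
    rw [rank_eq_finrank_Wsp]
    have hf0 : f ≠ 0 := by
      intro h
      apply hπa
      refine ⟨0, 0, fun x => ?_⟩
      show f (π.symm x) = dotp 0 x + 0
      simp [h, dotp_zero_left]
    have hone := one_mem_Wsp hf0
    have hWsup : Wsp f ⊔ span (ZMod 2) {onef m} = Wsp f :=
      sup_eq_left.mpr (span_le.mpr (Set.singleton_subset_iff.mpr hone))
    have h1V := one_not_mem_Vsp f
    have hfnot : f ∉ Vsp f ⊔ span (ZMod 2) {onef m} :=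
      fun hmem => hπa ((f_mem_iff_affine hB).mp hmem)
    rw [← hWsup, sup_identity, sup_right_comm, finrank_sup_singleton hfnot,
      finrank_sup_singleton h1V, finrank_Vsp_eq hB]
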